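/- arXiv:math-ph/0010036 — 2 statements merged into one kernel-verified Lean document; each statement's English description precedes it below -/
import Mathlib

section
/- (Theorem 2) Let H be a smooth Hamiltonian on M with ∂H/∂p_{1…n} = 1 and let Γ ⊂ M be the graph of a solution x ↦ U(x) = (x, u(x), p(x)) of the generalized Hamilton equations, i.e. the tangent n-vector ∂U/∂x^1 ∧ … ∧ ∂U/∂x^n satisfies (∂U/∂x^1 ∧ … ∧ ∂U/∂x^n)⌟Ω = (∂U/∂x^1 ∧ … ∧ ∂U/∂x^n)⌟(dH∧ω) at every point. Then for every a ∈ 𝔓^{n−1}M, the restriction of da to Γ equals the restriction of the external 𝔭-bracket {Hω, a} := −Ξ(a)⌟d(Hω) to Γ. Equivalently, for every open D ⊂ Γ with smooth boundary, ∫_D {Hω, a} = ∫_{∂D} a. -/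
open scoped BigOperators
open MeasureTheory

noncomputable section

namespace Pataplectic

/-- A multi-index `μ : Fin d → Fin e` is increasing. -/
def IncP {d e : ℕ} (μ : Fin d → Fin e) : Prop := ∀ a b : Fin d, a < b → μ a < μ b

instance {d e : ℕ} : DecidablePred (@IncP d e) := fun μ => by unfold IncP; infer_instance

variable (n k : ℕ)

/-- Coordinates on `X × Y`, where `X = ℝⁿ` and `Y = ℝᵏ`. -/
abbrev E := Fin (n + k) → ℝ

/-- Increasing multi-indices of length `n`, indexing the coordinates
`p_{μ₁…μₙ}` of a point of `ΛⁿT*(X×Y)` over a point of `X×Y`. -/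
abbrev Idx := {μ : Fin n → Fin (n + k) // IncP μ}

/-- The fiber of `ΛⁿT*(X×Y)`, described by its coordinates `p_{μ₁…μₙ}`. -/
abbrev Psp := Idx n k → ℝ

/-- The pataplectic manifold `M = ΛⁿT*(X×Y)`. -/
abbrev Mfd := E n k × Psp n k

/-- Evaluation `⟨p, z₁ ∧ … ∧ zₙ⟩` of `p ∈ ΛⁿT*_q(X×Y)` on an `n`-tuple of
tangent vectors: `Σ_{μ₁<…<μₙ} p_{μ₁…μₙ} det (z_b^{μ_a})`. -/
def pApply (p : Psp n k) (z : Fin n → E n k) : ℝ :=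
  ∑ μ : Idx n k, p μ * Matrix.det (Matrix.of fun a b => z b (μ.1 a))

/-- A (raw) differential `d`-form on `M`, given by its evaluation on `d`-tuples
of tangent vectors. -/
abbrev Form (d : ℕ) := Mfd n k → (Fin d → Mfd n k) → ℝ

variable {n k}

/-- The exterior derivative of a `d`-form on `M`, via the standard formula
on constant vector fields. -/
def extD {d : ℕ} (ω : Form n k d) : Form n k (d + 1) :=
  fun x v => ∑ i : Fin (d + 1),
    (-1 : ℝ) ^ (i : ℕ) * fderiv ℝ (fun y => ω y (i.removeNth v)) x (v i)

/-- Interior product of a vector field with a `(d+1)`-form. -/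
def iota {d : ℕ} (ξ : Mfd n k → Mfd n k) (ω : Form n k (d + 1)) : Form n k d :=
  fun x v => ω x (Fin.cons (ξ x) v)

/-- A raw form is smooth if its evaluation on any fixed tuple of (constant)
tangent vectors is a smooth function on `M`. -/
def SmoothF {d : ℕ} (ω : Form n k d) : Prop := ∀ v, ContDiff ℝ (⊤ : ℕ∞) (fun x => ω x v)

variable (n k)

/-- The Poincaré–Cartan form `θ = Σ_{μ₁<…<μₙ} p_{μ₁…μₙ} dq^{μ₁}∧…∧dq^{μₙ}`. -/
def theta : Form n k n := fun m v => pApply n k m.2 (fun i => (v i).1)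

/-- The pataplectic form `Ω = dθ`. -/
def Omega : Form n k (n + 1) := extD (theta n k)

/-- The volume form `ω = dx¹∧…∧dxⁿ`, pulled back to `M`. -/
def vol : Form n k n := fun _ v => Matrix.det (Matrix.of fun a b => (v b).1 (Fin.castAdd k a))

/-- Lie bracket of two vector fields on `M`. -/
def lieB {n k : ℕ} (ξ η : Mfd n k → Mfd n k) : Mfd n k → Mfd n k :=
  fun x => fderiv ℝ η x (ξ x) - fderiv ℝ ξ x (η x)


/- Throughout, the dimension of `X` is `n + 1`, so that "(n-1)-forms" on
`M = Λ^{n+1}T*(X×Y)` have degree `n`. -/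
variable (n k : ℕ)

/-- The graph map `U : x ↦ (x, u(x), p(x)) ∈ M`. -/
def graphMap (u : (Fin (n + 1) → ℝ) → (Fin k → ℝ))
    (pm : (Fin (n + 1) → ℝ) → Psp (n + 1) k) (x : Fin (n + 1) → ℝ) : Mfd (n + 1) k :=
  (Fin.append x (u x), pm x)

/-- The tangent frame `(∂U/∂x¹, …, ∂U/∂xⁿ)` of a parametrized surface in `M`. -/
def frame (γ : (Fin (n + 1) → ℝ) → Mfd (n + 1) k) (x : Fin (n + 1) → ℝ) :
    Fin (n + 1) → Mfd (n + 1) k :=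
  fun α => fderiv ℝ γ x (Pi.single α 1)

/-- The `(n+2)`-form `dH ∧ ω` on `M`. -/
def dHomega (H : Mfd (n + 1) k → ℝ) : Form (n + 1) k (n + 2) :=
  fun y w => ∑ i : Fin (n + 2),
    (-1 : ℝ) ^ (i : ℕ) * fderiv ℝ H y (w i) * vol (n + 1) k y (i.removeNth w)

/-- The multi-index `(1, …, n)` so that `p_{1…n} = ε`. -/
def idx0 : Idx (n + 1) k :=
  ⟨fun a => Fin.castAdd k a, fun _ _ h => Fin.strictMono_castAdd k h⟩


theorem rm1 {V : Type*} {d : ℕ} (j : Fin (d+1)) (ξ : V) (v : Fin (d+1) → V) :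
    Fin.removeNth (α := fun _ => V) j.succ (Fin.cons ξ v) = Fin.cons ξ (j.removeNth v) := by
  funext t
  induction t using Fin.cases with
  | zero => simp [Fin.removeNth]
  | succ s => simp [Fin.removeNth]

theorem rm2 {V : Type*} {d : ℕ} (j : Fin (d+1)) (ξ : V) (v : Fin (d+1) → V) :
    Fin.removeNth (α := fun _ => V) j.castSucc (Fin.snoc v ξ) = Fin.snoc (j.removeNth v) ξ := by
  funext t
  induction t using Fin.lastCases with
  | last => simp [Fin.removeNth, Fin.succAbove_ne_last_last (Fin.castSucc_lt_last j).ne]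
  | cast s => simp [Fin.removeNth, Fin.castSucc_succAbove_castSucc]

theorem detcs {V : Type*} {d : ℕ} (g : V → Fin (d+1) → ℝ) (η : V) (r : Fin d → V) :
    Matrix.det (Matrix.of fun a b => g ((Fin.cons η r : Fin (d+1) → V) b) a)
      = (-1:ℝ)^d * Matrix.det (Matrix.of fun a b => g ((Fin.snoc r η : Fin (d+1) → V) b) a) := by
  set σ : Equiv.Perm (Fin (d+1)) := (finRotate (d+1)).symm with hσ
  have hc : ∀ b, (Fin.cons η r : Fin (d+1) → V) b
      = (Fin.snoc r η : Fin (d+1) → V) (σ b) := by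
    intro b
    induction b using Fin.cases with
    | zero =>
        have h0 : σ 0 = Fin.last d := by
          rw [hσ, Equiv.symm_apply_eq, finRotate_last]
        rw [h0]; simp
    | succ s =>
        have h1 : σ s.succ = Fin.castSucc s := by
          rw [hσ, Equiv.symm_apply_eq, finRotate_succ_apply, Fin.coeSucc_eq_succ]
        rw [h1]; simp
  have hm : (Matrix.of fun a b => g ((Fin.cons η r : Fin (d+1) → V) b) a)
      = (Matrix.of fun (a b : Fin (d+1)) => g ((Fin.snoc r η : Fin (d+1) → V) b) a).submatrix
          id ⇑σ := by
    ext a b; simp only [Matrix.submatrix_apply, Matrix.of_apply, id_eq, hc b]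
  rw [hm, Matrix.det_permute']
  have hs : Equiv.Perm.sign σ = (-1:ℤˣ)^d := by
    rw [hσ, Equiv.Perm.sign_symm, sign_finRotate, Nat.add_sub_cancel]
  rw [hs]
  push_cast
  ring

theorem sum_shift {V : Type*} {d : ℕ} (G : V → (Fin (d+1) → V) → ℝ)
    (hG : ∀ ξ η r, G ξ (Fin.cons η r) = (-1:ℝ)^d * G ξ (Fin.snoc r η))
    (ξ : V) (v : Fin (d+1) → V) :
    ∑ i : Fin (d+2), (-1:ℝ)^(i:ℕ)
        * G ((Fin.cons ξ v : Fin (d+2) → V) i) (Fin.removeNth (α := fun _ => V) i (Fin.cons ξ v))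
      = (-1:ℝ)^(d+1)
        * ∑ i : Fin (d+2), (-1:ℝ)^(i:ℕ)
            * G ((Fin.snoc v ξ : Fin (d+2) → V) i) (Fin.removeNth (α := fun _ => V) i (Fin.snoc v ξ)) := by
  rw [Fin.sum_univ_succ]
  rw [Fin.sum_univ_castSucc (f := fun i : Fin (d+2) =>
    (-1:ℝ)^(i:ℕ) * G ((Fin.snoc v ξ : Fin (d+2) → V) i) (Fin.removeNth (α := fun _ => V) i (Fin.snoc v ξ)))]
  simp only [Fin.removeNth_zero, Fin.tail_cons, Fin.cons_zero, Fin.cons_succ, Fin.val_zero,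
    pow_zero, one_mul, Fin.val_succ, Fin.snoc_last, Fin.removeNth_last, Fin.init_snoc,
    Fin.snoc_castSucc, Fin.val_last, Fin.coe_castSucc, rm1, rm2, hG]
  rw [mul_add, Finset.mul_sum]
  have h2 : (-1:ℝ)^(d+1) * ((-1:ℝ)^(d+1) * G ξ v) = G ξ v := by
    rw [← mul_assoc, ← pow_add, Even.neg_one_pow ⟨d+1, by ring⟩, one_mul]
  rw [h2, add_comm _ (G ξ v)]
  congr 1
  exact Finset.sum_congr rfl fun j _ => by ring


theorem omega_apply (n k : ℕ) (x : Mfd n k) (w : Fin (n+1) → Mfd n k) :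
    Omega n k x w = ∑ i : Fin (n+1), (-1:ℝ)^(i:ℕ) *
      (∑ μ : Idx n k, (w i).2 μ * Matrix.det (Matrix.of fun a b =>
        ((Fin.removeNth (α := fun _ => Mfd n k) i w) b).1 (μ.1 a))) := by
  unfold Omega extD
  refine Finset.sum_congr rfl fun i _ => ?_
  congr 1
  set c : Fin n → Mfd n k := i.removeNth w with hc
  set T : Mfd n k →L[ℝ] ℝ := ∑ μ : Idx n k,
    (Matrix.det (Matrix.of fun a b => (c b).1 (μ.1 a))) •
      ((ContinuousLinearMap.proj μ).comp (ContinuousLinearMap.snd ℝ (E n k) (Psp n k))) with hT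
  have hfun : (fun y : Mfd n k => theta n k y c) = T := by
    funext y
    simp only [theta, pApply, hT, ContinuousLinearMap.sum_apply, ContinuousLinearMap.smul_apply,
      ContinuousLinearMap.coe_comp', Function.comp_apply, ContinuousLinearMap.coe_snd',
      ContinuousLinearMap.proj_apply, smul_eq_mul]
    exact Finset.sum_congr rfl fun μ _ => mul_comm _ _
  rw [hfun, ContinuousLinearMap.fderiv]
  simp only [hT, ContinuousLinearMap.sum_apply, ContinuousLinearMap.smul_apply,
    ContinuousLinearMap.coe_comp', Function.comp_apply, ContinuousLinearMap.coe_snd',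
    ContinuousLinearMap.proj_apply, smul_eq_mul]
  exact Finset.sum_congr rfl fun μ _ => mul_comm _ _

theorem extD_Hvol {n k : ℕ} (H : Mfd n k → ℝ) (hH : Differentiable ℝ H)
    (x : Mfd n k) (w : Fin (n+1) → Mfd n k) :
    extD (fun y v => H y * vol n k y v) x w
      = ∑ i : Fin (n+1), (-1:ℝ)^(i:ℕ) * fderiv ℝ H x (w i)
          * vol n k x (Fin.removeNth (α := fun _ => Mfd n k) i w) := by
  unfold extD
  refine Finset.sum_congr rfl fun i _ => ?_
  have h0 : (fun y : Mfd n k => H y * vol n k y (i.removeNth w))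
      = fun y : Mfd n k => H y * vol n k x (i.removeNth w) := rfl
  rw [h0, fderiv_mul_const (hH x)]
  simp only [ContinuousLinearMap.smul_apply, smul_eq_mul]
  ring

/-- (Theorem 2.) Let `H` be a smooth Hamiltonian with `∂H/∂p_{1…n} = 1` and let
`Γ ⊆ M` be the graph of a solution `x ↦ U(x) = (x, u(x), p(x))` of the generalized
Hamilton equations `(∂U/∂x¹∧…∧∂U/∂xⁿ)⌟Ω = (∂U/∂x¹∧…∧∂U/∂xⁿ)⌟(dH∧ω)`. Then for every
`a ∈ 𝔓^{n-1}M` (with `da = −Ξ(a)⌟Ω`), the restriction of `da` to `Γ` equals the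
restriction of the external 𝔭-bracket `{Hω, a} = −Ξ(a)⌟d(Hω)` to `Γ`. -/
theorem dynamics_of_observables
    (n k : ℕ)
    (H : Mfd (n + 1) k → ℝ) (hH : ContDiff ℝ (⊤ : ℕ∞) H)
    (hHp : ∀ m : Mfd (n + 1) k,
      fderiv ℝ H m ((0 : E (n + 1) k), Pi.single (idx0 n k) 1) = 1)
    (u : (Fin (n + 1) → ℝ) → (Fin k → ℝ)) (hu : ContDiff ℝ (⊤ : ℕ∞) u)
    (pm : (Fin (n + 1) → ℝ) → Psp (n + 1) k) (hpm : ContDiff ℝ (⊤ : ℕ∞) pm)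
    (hHam : ∀ (x : Fin (n + 1) → ℝ) (V : Mfd (n + 1) k),
      Omega (n + 1) k (graphMap n k u pm x)
          (Fin.snoc (frame n k (graphMap n k u pm) x) V)
        = dHomega n k H (graphMap n k u pm x)
            (Fin.snoc (frame n k (graphMap n k u pm) x) V))
    (a : Form (n + 1) k n) (ha : SmoothF a)
    (Xia : Mfd (n + 1) k → Mfd (n + 1) k)
    (hXia : ∀ (x : Mfd (n + 1) k) (v : Fin (n + 1) → Mfd (n + 1) k),
      extD a x v = - iota Xia (Omega (n + 1) k) x v) :
    ∀ x : Fin (n + 1) → ℝ,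
      extD a (graphMap n k u pm x) (frame n k (graphMap n k u pm) x)
        = - iota Xia (extD (fun y w => H y * vol (n + 1) k y w))
            (graphMap n k u pm x) (frame n k (graphMap n k u pm) x) := by
  intro x
  set m : Mfd (n+1) k := graphMap n k u pm x with hm
  set fr : Fin (n+1) → Mfd (n+1) k := frame n k (graphMap n k u pm) x with hfr
  set Ξ : Mfd (n+1) k := Xia m with hΞ
  -- the two "coefficient" forms
  set Gθ : Mfd (n+1) k → (Fin (n+1) → Mfd (n+1) k) → ℝ := fun ξ c =>
    ∑ μ : Idx (n+1) k, ξ.2 μ * Matrix.det (Matrix.of fun a b => (c b).1 (μ.1 a)) with hGθdef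
  set GH : Mfd (n+1) k → (Fin (n+1) → Mfd (n+1) k) → ℝ := fun ξ c =>
    fderiv ℝ H m ξ * vol (n+1) k m c with hGHdef
  have hGθ : ∀ ξ η r, Gθ ξ (Fin.cons η r) = (-1:ℝ)^n * Gθ ξ (Fin.snoc r η) := by
    intro ξ η r
    rw [hGθdef]
    simp only
    rw [Finset.mul_sum]
    refine Finset.sum_congr rfl fun μ _ => ?_
    rw [detcs (fun (z : Mfd (n+1) k) a => z.1 (μ.1 a)) η r]
    ring
  have hGH : ∀ ξ η r, GH ξ (Fin.cons η r) = (-1:ℝ)^n * GH ξ (Fin.snoc r η) := by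
    intro ξ η r
    rw [hGHdef]
    simp only [vol]
    rw [detcs (fun (z : Mfd (n+1) k) a => z.1 (Fin.castAdd k a)) η r]
    ring
  have hΩ : ∀ w : Fin (n+2) → Mfd (n+1) k, Omega (n+1) k m w
      = ∑ i : Fin (n+2), (-1:ℝ)^(i:ℕ) * Gθ (w i) (Fin.removeNth (α := fun _ => Mfd (n+1) k) i w) :=
    fun w => omega_apply (n+1) k m w
  have hdH : ∀ w : Fin (n+2) → Mfd (n+1) k, dHomega n k H m w
      = ∑ i : Fin (n+2), (-1:ℝ)^(i:ℕ) * GH (w i) (Fin.removeNth (α := fun _ => Mfd (n+1) k) i w) := by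
    intro w
    unfold dHomega
    exact Finset.sum_congr rfl fun i _ => mul_assoc _ _ _
  have key : Omega (n+1) k m (Fin.cons Ξ fr) = dHomega n k H m (Fin.cons Ξ fr) := by
    have e1 := sum_shift Gθ hGθ Ξ fr
    have e2 := sum_shift GH hGH Ξ fr
    rw [hΩ, e1, ← hΩ, hHam x Ξ, hdH, ← e2, ← hdH]
  have hvol : extD (fun y w => H y * vol (n+1) k y w) m (Fin.cons Ξ fr)
      = dHomega n k H m (Fin.cons Ξ fr) := by
    rw [extD_Hvol H (hH.differentiable (by simp)) m (Fin.cons Ξ fr)]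
    unfold dHomega
    rfl
  show extD a m fr = - iota Xia (extD (fun y w => H y * vol (n + 1) k y w)) m fr
  rw [hXia m fr]
  show -(Omega (n+1) k m (Fin.cons Ξ fr))
      = -(extD (fun y w => H y * vol (n + 1) k y w) m (Fin.cons Ξ fr))
  rw [key, hvol]

end Pataplectic

end
end

section
/- (Lemma 7, Noether) For every vector field ξ on X×Y and every smooth Hamiltonian H on M, the external 𝔭-bracket of Hω with P_ξ := ξ⌟θ satisfies {Hω, P_ξ} = L_{Ξ(P_ξ)}(θ − Hω) + d( ξ⌟(Hω) ), where L denotes the Lie derivative. Consequently, if ξ is an infinitesimal symmetry of the variational problem, i.e. L_{Ξ(P_ξ)}(θ − Hω) = 0, then along the graph Γ of any solution of the Hamilton equations (∂U/∂x^1∧…∧∂U/∂x^n)⌟Ω = (∂U/∂x^1∧…∧∂U/∂x^n)⌟(dH∧ω), the Noether current P*_ξ := ξ⌟(θ − Hω) is closed: d( ξ⌟(θ − Hω) )|_Γ = 0. -/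
open scoped BigOperators
open MeasureTheory

noncomputable section

namespace Pataplectic

variable (n k : ℕ)

variable {n k}

variable (n k)

/- Throughout, the dimension of `X` is `n + 1`, so that the Noether currents
(contractions of the `(n+1)`-form `θ − Hω` with a vector field) have degree `n`. -/
variable (n k : ℕ)

/-- The lift to `M` of a vector field `ξ` on `X×Y`. -/
def lift (ξ : E (n + 1) k → E (n + 1) k) : Mfd (n + 1) k → Mfd (n + 1) k :=
  fun m => (ξ m.1, 0)

/-- The Lagrangian density form `θ − Hω` on `M`. -/
def thH (H : Mfd (n + 1) k → ℝ) : Form (n + 1) k (n + 1) :=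
  fun y w => theta (n + 1) k y w - H y * vol (n + 1) k y w

/-- The `n`-form `Hω` on `M`. -/
def Hw (H : Mfd (n + 1) k → ℝ) : Form (n + 1) k (n + 1) :=
  fun y w => H y * vol (n + 1) k y w

/-! ### Auxiliary lemmas for the proof of Noether's theorem -/

section AuxLemmas

variable {n k : ℕ}

lemma pApply_col_zero (p : Psp n k) (z : Fin n → E n k) (b₀ : Fin n) (h : z b₀ = 0) :
    pApply n k p z = 0 := by
  unfold pApply
  refine Finset.sum_eq_zero fun μ _ => ?_
  rw [Matrix.det_eq_zero_of_column_eq_zero b₀ (fun i => by simp [h]), mul_zero]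

lemma pApply_zero_left (z : Fin n → E n k) : pApply n k 0 z = 0 := by simp [pApply]

lemma pApply_single (ν : Idx n k) (z : Fin n → E n k) :
    pApply n k (Pi.single ν 1) z = Matrix.det (Matrix.of fun a b => z b (ν.1 a)) := by
  unfold pApply
  rw [Fintype.sum_eq_single ν (fun μ hμ => by rw [Pi.single_eq_of_ne hμ, zero_mul])]
  simp

lemma differentiableAt_finset_prod {X : Type*} [NormedAddCommGroup X] [NormedSpace ℝ X]
    {ι : Type*} (s : Finset ι) (f : ι → X → ℝ) {x : X}
    (hf : ∀ i, DifferentiableAt ℝ (f i) x) :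
    DifferentiableAt ℝ (fun y => ∏ i ∈ s, f i y) x := by
  classical
  induction s using Finset.induction_on with
  | empty => simp
  | insert a s hni ih =>
    simp only [Finset.prod_insert hni]
    exact (hf _).mul ih

lemma differentiableAt_det {ι : Type*} [Fintype ι] [DecidableEq ι]
    {X : Type*} [NormedAddCommGroup X] [NormedSpace ℝ X]
    {f : X → Matrix ι ι ℝ} {x : X}
    (h : ∀ i j, DifferentiableAt ℝ (fun y => f y i j) x) :
    DifferentiableAt ℝ (fun y => (f y).det) x := by
  simp only [Matrix.det_apply']
  exact DifferentiableAt.fun_sum fun σ _ =>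
    (differentiableAt_finset_prod _ _ fun i => h (σ i) i).const_mul _

/-- The differential of `y ↦ ⟨y.2, z⟩` (a linear function of `y`). -/
lemma hasFDerivAt_pApply_const (z : Fin n → E n k) (x : Mfd n k) :
    HasFDerivAt (fun y : Mfd n k => pApply n k y.2 z)
      (∑ μ : Idx n k, Matrix.det (Matrix.of fun a b => z b (μ.1 a)) •
        ((ContinuousLinearMap.proj μ : Psp n k →L[ℝ] ℝ).comp
          (ContinuousLinearMap.snd ℝ (E n k) (Psp n k)))) x := by
  unfold pApply
  refine HasFDerivAt.fun_sum fun μ _ => ?_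
  exact (((ContinuousLinearMap.proj μ : Psp n k →L[ℝ] ℝ).comp
    (ContinuousLinearMap.snd ℝ (E n k) (Psp n k))).hasFDerivAt).mul_const _

lemma fderiv_pApply_const (z : Fin n → E n k) (x V : Mfd n k) :
    fderiv ℝ (fun y : Mfd n k => pApply n k y.2 z) x V = pApply n k V.2 z := by
  rw [(hasFDerivAt_pApply_const z x).fderiv]
  simp only [ContinuousLinearMap.sum_apply, ContinuousLinearMap.smul_apply,
    ContinuousLinearMap.comp_apply, ContinuousLinearMap.coe_snd',
    ContinuousLinearMap.proj_apply, smul_eq_mul, pApply]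
  exact Finset.sum_congr rfl fun μ _ => mul_comm _ _

lemma differentiable_pApply_const (z : Fin n → E n k) :
    Differentiable ℝ (fun y : Mfd n k => pApply n k y.2 z) :=
  fun x => (hasFDerivAt_pApply_const z x).differentiableAt

lemma Omega_eq (x : Mfd n k) (w : Fin (n + 1) → Mfd n k) :
    Omega n k x w = ∑ i : Fin (n + 1), (-1 : ℝ) ^ (i : ℕ) *
      pApply n k (w i).2 (fun a => (Fin.removeNth i w a).1) := by
  unfold Omega extD
  refine Finset.sum_congr rfl fun i _ => ?_
  congr 1
  have h : (fun y => theta n k y (Fin.removeNth i w)) =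
      fun y : Mfd n k => pApply n k y.2 (fun a => (Fin.removeNth i w a).1) := rfl
  rw [h]
  exact fderiv_pApply_const _ x (w i)

lemma extD_sub {d : ℕ} {ω₁ ω₂ : Form n k d}
    (h₁ : ∀ v, Differentiable ℝ fun y => ω₁ y v) (h₂ : ∀ v, Differentiable ℝ fun y => ω₂ y v)
    (x : Mfd n k) (v : Fin (d + 1) → Mfd n k) :
    extD (fun y u => ω₁ y u - ω₂ y u) x v = extD ω₁ x v - extD ω₂ x v := by
  unfold extD
  rw [← Finset.sum_sub_distrib]
  refine Finset.sum_congr rfl fun i _ => ?_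
  rw [fderiv_fun_sub ((h₁ _) x) ((h₂ _) x)]
  simp only [ContinuousLinearMap.sub_apply]
  ring

end AuxLemmas

section AuxLemmas2

variable {n k : ℕ}

/-- Cyclically permuting the columns of a determinant. -/
lemma det_cons_cycle {N : ℕ} {β : Type*} (col : β → Fin (N + 1) → ℝ) (c : β) (z : Fin N → β) :
    Matrix.det (Matrix.of fun a b => col ((Fin.cons c z : Fin (N + 1) → β) b) a)
      = (-1 : ℝ) ^ N *
        Matrix.det (Matrix.of fun a b => col ((Fin.snoc z c : Fin (N + 1) → β) b) a) := by
  have hs : (Matrix.of fun a b => col ((Fin.snoc z c : Fin (N + 1) → β) b) a)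
      = (Matrix.of fun a b =>
          col ((Fin.cons c z : Fin (N + 1) → β) b) a).submatrix id (finRotate (N + 1)) := by
    ext a b
    simp [Matrix.submatrix_apply, Fin.snoc_eq_cons_rotate]
  rw [hs, Matrix.det_permute' (finRotate (N + 1)), sign_finRotate]
  have h1 : ((((-1 : ℤˣ) ^ N : ℤˣ) : ℤ) : ℝ) = (-1 : ℝ) ^ N := by push_cast; ring
  rw [Nat.add_sub_cancel, h1, ← mul_assoc, ← pow_add]
  rw [Even.neg_one_pow ⟨N, by ring⟩, one_mul]

lemma removeNth_succ_cons {N : ℕ} {α : Type*} (j : Fin (N + 1)) (V : α) (v : Fin (N + 1) → α) :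
    Fin.removeNth j.succ (Fin.cons V v : Fin (N + 2) → α)
      = (Fin.cons V (Fin.removeNth j v) : Fin (N + 1) → α) := by
  funext a
  simp only [Fin.removeNth]
  refine Fin.cases ?_ (fun b => ?_) a
  · rw [Fin.succ_succAbove_zero, Fin.cons_zero, Fin.cons_zero]
  · rw [Fin.succ_succAbove_succ, Fin.cons_succ, Fin.cons_succ]
    rfl

lemma removeNth_castSucc_snoc {N : ℕ} {α : Type*} (j : Fin (N + 1)) (V : α) (v : Fin (N + 1) → α) :
    Fin.removeNth j.castSucc (Fin.snoc v V : Fin (N + 2) → α)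
      = (Fin.snoc (Fin.removeNth j v) V : Fin (N + 1) → α) := by
  funext a
  simp only [Fin.removeNth]
  refine Fin.lastCases ?_ (fun b => ?_) a
  · rw [Fin.succAbove_of_le_castSucc _ _ (by
      simp only [Fin.le_def, Fin.coe_castSucc, Fin.val_last]
      omega), Fin.succ_last, Fin.snoc_last, Fin.snoc_last]
  · rw [Fin.castSucc_succAbove_castSucc, Fin.snoc_castSucc, Fin.snoc_castSucc]
    rfl

/-- Moving the distinguished vector from the front to the back in the standard
formula for a `1`-form wedged with an alternating `(N+1)`-form. -/
lemma sum_shuffle {α : Type*} {N : ℕ} (F : α → (Fin (N + 1) → α) → ℝ)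
    (hF : ∀ (V c : α) (z : Fin N → α),
      F V (Fin.cons c z) = (-1 : ℝ) ^ N * F V (Fin.snoc z c))
    (V : α) (v : Fin (N + 1) → α) :
    (∑ i : Fin (N + 2), (-1 : ℝ) ^ (i : ℕ) *
        F ((Fin.cons V v : Fin (N + 2) → α) i)
          (Fin.removeNth i (Fin.cons V v : Fin (N + 2) → α)))
      = (-1 : ℝ) ^ (N + 1) *
        ∑ i : Fin (N + 2), (-1 : ℝ) ^ (i : ℕ) *
          F ((Fin.snoc v V : Fin (N + 2) → α) i)
            (Fin.removeNth i (Fin.snoc v V : Fin (N + 2) → α)) := by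
  rw [Fin.sum_univ_succ]
  conv_rhs => rw [Fin.sum_univ_castSucc]
  simp only [Fin.cons_zero, Fin.removeNth_zero, Fin.tail_cons, Fin.val_zero, pow_zero, one_mul,
    Fin.cons_succ, Fin.val_succ, Fin.coe_castSucc, Fin.snoc_castSucc,
    Fin.removeNth_last, Fin.init_snoc, Fin.snoc_last, Fin.val_last,
    removeNth_succ_cons, removeNth_castSucc_snoc]
  simp only [fun (j : Fin (N + 1)) => hF (v j) V (Fin.removeNth j v)]
  rw [mul_add, Finset.mul_sum]
  have hA : (-1 : ℝ) ^ (N + 1) * ((-1 : ℝ) ^ (N + 1) * F V v) = F V v := by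
    rw [← mul_assoc, ← pow_add, Even.neg_one_pow ⟨N + 1, by ring⟩, one_mul]
  rw [hA]
  rw [add_comm (∑ _x, _)]
  congr 1
  refine Finset.sum_congr rfl fun j _ => ?_
  ring

/-- The first components of a `cons` tuple on `M`. -/
lemma fst_cons (Vm : Mfd n k) {N : ℕ} (zm : Fin N → Mfd n k) :
    (fun i => ((Fin.cons Vm zm : Fin (N + 1) → Mfd n k) i).1)
      = (Fin.cons Vm.1 (fun j => (zm j).1) : Fin (N + 1) → E n k) := by
  funext i
  refine Fin.cases ?_ (fun b => ?_) i <;> simp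

end AuxLemmas2

section AuxLemmas3

variable {n k : ℕ}

lemma theta_fst_congr {u u' : Fin n → Mfd n k} (h : ∀ i, (u i).1 = (u' i).1) (y : Mfd n k) :
    theta n k y u = theta n k y u' := by
  unfold theta pApply
  refine Finset.sum_congr rfl fun μ _ => ?_
  congr 1
  congr 1
  ext a b
  simp only [Matrix.of_apply]
  rw [h b]

lemma vol_fst_congr {u u' : Fin n → Mfd n k} (h : ∀ i, (u i).1 = (u' i).1) (y : Mfd n k) :
    vol n k y u = vol n k y u' := by
  unfold vol
  congr 1
  ext a b
  simp only [Matrix.of_apply]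
  rw [h b]

/-- The exterior differential of `Hω` is `dH ∧ ω`. -/
lemma extD_Hw_eq (H : Mfd (n + 1) k → ℝ) (hH : Differentiable ℝ H) (x : Mfd (n + 1) k)
    (w : Fin (n + 2) → Mfd (n + 1) k) :
    extD (Hw n k H) x w = dHomega n k H x w := by
  unfold extD dHomega
  refine Finset.sum_congr rfl fun i _ => ?_
  have hfun : (fun y => Hw n k H y (Fin.removeNth i w))
      = fun y => H y * Matrix.det (Matrix.of fun a b =>
          ((Fin.removeNth i w : Fin (n + 1) → Mfd (n + 1) k) b).1 (Fin.castAdd k a)) := rfl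
  rw [hfun, fderiv_mul_const (hH x)]
  show (-1 : ℝ) ^ (i : ℕ) * ((Matrix.det _) • (fderiv ℝ H x)) (w i) = _
  simp only [ContinuousLinearMap.smul_apply, smul_eq_mul]
  show _ = (-1 : ℝ) ^ (i : ℕ) * (fderiv ℝ H x) (w i) * Matrix.det _
  ring

lemma hasFDerivAt_liftTheta (ξ : E (n + 1) k → E (n + 1) k) (hξ : Differentiable ℝ ξ)
    (c : Fin n → E (n + 1) k) (x : Mfd (n + 1) k) :
    ∃ L : Mfd (n + 1) k →L[ℝ] ℝ,
      HasFDerivAt (fun y : Mfd (n + 1) k =>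
        pApply (n + 1) k y.2 (Fin.cons (ξ y.1) c : Fin (n + 1) → E (n + 1) k)) L x ∧
      ∀ p' : Psp (n + 1) k, L (0, p') =
        pApply (n + 1) k p' (Fin.cons (ξ x.1) c : Fin (n + 1) → E (n + 1) k) := by
  set g : Idx (n + 1) k → E (n + 1) k → ℝ := fun μ q =>
    Matrix.det (Matrix.of fun a b =>
      (Fin.cons (ξ q) c : Fin (n + 1) → E (n + 1) k) b (μ.1 a)) with hg
  have hgd : ∀ μ, DifferentiableAt ℝ (g μ) x.1 := by
    intro μ
    apply differentiableAt_det
    intro a b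
    refine Fin.cases ?_ (fun b' => ?_) b
    · simp only [Matrix.of_apply, Fin.cons_zero]
      exact ((differentiable_pi.mp hξ) (μ.1 a)).differentiableAt
    · simp only [Matrix.of_apply, Fin.cons_succ]
      exact differentiableAt_const _
  refine ⟨∑ μ : Idx (n + 1) k,
      ((x.2 μ) • ((fderiv ℝ (g μ) x.1).comp
          (ContinuousLinearMap.fst ℝ (E (n + 1) k) (Psp (n + 1) k)))
        + (g μ x.1) • ((ContinuousLinearMap.proj μ : Psp (n + 1) k →L[ℝ] ℝ).comp
            (ContinuousLinearMap.snd ℝ (E (n + 1) k) (Psp (n + 1) k)))), ?_, ?_⟩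
  · have hfun : (fun y : Mfd (n + 1) k =>
        pApply (n + 1) k y.2 (Fin.cons (ξ y.1) c : Fin (n + 1) → E (n + 1) k))
        = fun y => ∑ μ : Idx (n + 1) k, y.2 μ * g μ y.1 := rfl
    rw [hfun]
    refine HasFDerivAt.fun_sum fun μ _ => ?_
    have h1 : HasFDerivAt (fun y : Mfd (n + 1) k => y.2 μ)
        ((ContinuousLinearMap.proj μ : Psp (n + 1) k →L[ℝ] ℝ).comp
          (ContinuousLinearMap.snd ℝ (E (n + 1) k) (Psp (n + 1) k))) x :=
      ((ContinuousLinearMap.proj μ : Psp (n + 1) k →L[ℝ] ℝ).comp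
        (ContinuousLinearMap.snd ℝ (E (n + 1) k) (Psp (n + 1) k))).hasFDerivAt
    have h2 : HasFDerivAt (fun y : Mfd (n + 1) k => g μ y.1)
        ((fderiv ℝ (g μ) x.1).comp
          (ContinuousLinearMap.fst ℝ (E (n + 1) k) (Psp (n + 1) k))) x :=
      ((hgd μ).hasFDerivAt).comp x hasFDerivAt_fst
    exact h1.mul h2
  · intro p'
    simp only [ContinuousLinearMap.sum_apply, ContinuousLinearMap.add_apply,
      ContinuousLinearMap.smul_apply, ContinuousLinearMap.comp_apply,
      ContinuousLinearMap.coe_fst', ContinuousLinearMap.coe_snd',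
      ContinuousLinearMap.proj_apply, smul_eq_mul, map_zero, mul_zero, zero_add]
    have hp : pApply (n + 1) k p' (Fin.cons (ξ x.1) c : Fin (n + 1) → E (n + 1) k)
        = ∑ μ : Idx (n + 1) k, p' μ * g μ x.1 := rfl
    rw [hp]
    exact Finset.sum_congr rfl fun μ _ => mul_comm _ _

lemma differentiable_liftTheta (ξ : E (n + 1) k → E (n + 1) k) (hξ : Differentiable ℝ ξ)
    (c : Fin n → E (n + 1) k) :
    Differentiable ℝ (fun y : Mfd (n + 1) k =>
      pApply (n + 1) k y.2 (Fin.cons (ξ y.1) c : Fin (n + 1) → E (n + 1) k)) :=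
  fun x => ((hasFDerivAt_liftTheta ξ hξ c x).choose_spec.1).differentiableAt

lemma fderiv_liftTheta_vert (ξ : E (n + 1) k → E (n + 1) k) (hξ : Differentiable ℝ ξ)
    (c : Fin n → E (n + 1) k) (x : Mfd (n + 1) k) (p' : Psp (n + 1) k) :
    fderiv ℝ (fun y : Mfd (n + 1) k =>
        pApply (n + 1) k y.2 (Fin.cons (ξ y.1) c : Fin (n + 1) → E (n + 1) k)) x
        ((0 : E (n + 1) k), p')
      = pApply (n + 1) k p' (Fin.cons (ξ x.1) c : Fin (n + 1) → E (n + 1) k) := by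
  obtain ⟨L, h1, h2⟩ := hasFDerivAt_liftTheta ξ hξ c x
  rw [h1.fderiv]
  exact h2 p'

lemma det_unit_cols {νf : Fin (n + 1) → Fin (n + 1 + k)} (hinj : Function.Injective νf)
    (a₀ : Fin (n + 1)) (w : E (n + 1) k) :
    Matrix.det (Matrix.of fun a b =>
        (Fin.cons w (fun j => (Pi.single (νf (a₀.succAbove j)) 1 : E (n + 1) k))
          : Fin (n + 1) → E (n + 1) k) b (νf a))
      = (-1 : ℝ) ^ (a₀ : ℕ) * w (νf a₀) := by
  set A : Matrix (Fin (n + 1)) (Fin (n + 1)) ℝ := Matrix.of fun a b =>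
    (Fin.cons w (fun j => (Pi.single (νf (a₀.succAbove j)) 1 : E (n + 1) k))
      : Fin (n + 1) → E (n + 1) k) b (νf a) with hA
  have hside : ∀ a, a ≠ a₀ →
      ((-1 : ℝ) ^ (a : ℕ) * A a 0 * (A.submatrix a.succAbove Fin.succ).det) = 0 := by
    intro a ha
    obtain ⟨a', ha'⟩ := Fin.exists_succAbove_eq (show a₀ ≠ a from Ne.symm ha)
    have hz : (A.submatrix a.succAbove Fin.succ).det = 0 := by
      apply Matrix.det_eq_zero_of_row_eq_zero a'
      intro j
      simp only [hA, Matrix.submatrix_apply, Matrix.of_apply, Fin.cons_succ, ha',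
        Pi.single_apply]
      rw [if_neg]
      intro hcon
      exact Fin.succAbove_ne a₀ j (hinj hcon).symm
    rw [hz, mul_zero]
  rw [Matrix.det_succ_column_zero, Fintype.sum_eq_single a₀ hside]
  have hid : A.submatrix a₀.succAbove Fin.succ = 1 := by
    ext a' b'
    simp only [hA, Matrix.submatrix_apply, Matrix.of_apply, Fin.cons_succ, Matrix.one_apply,
      Pi.single_apply, hinj.eq_iff, (Fin.succAbove_right_injective (p := a₀)).eq_iff]
  rw [hid, Matrix.det_one, mul_one]
  have h0 : A a₀ 0 = w (νf a₀) := by simp [hA]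
  rw [h0]

end AuxLemmas3

section AuxLemmas4

variable {n k : ℕ}

/-- The defining property of `Ξ(P_ξ)` forces its `X×Y`-component to be `ξ`. -/
lemma Xi_fst (ξ : E (n + 1) k → E (n + 1) k) (hξ : Differentiable ℝ ξ)
    (Xi : Mfd (n + 1) k → Mfd (n + 1) k)
    (hXi : ∀ (x : Mfd (n + 1) k) (v : Fin (n + 1) → Mfd (n + 1) k),
      extD (iota (lift n k ξ) (theta (n + 1) k)) x v
        = - iota Xi (Omega (n + 1) k) x v)
    (x : Mfd (n + 1) k) : (Xi x).1 = ξ x.1 := by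
  funext m
  have htn : min (m : ℕ) n < n + 1 := by omega
  set νf : Fin (n + 1) → Fin (n + 1 + k) := fun a =>
    if (a : ℕ) = min (m : ℕ) n then m else ⟨(a : ℕ), by omega⟩ with hνf
  have hmono : IncP νf := by
    intro a b hab
    have hab' : (a : ℕ) < (b : ℕ) := hab
    have hm : (m : ℕ) < n + 1 + k := m.isLt
    have hb : (b : ℕ) < n + 1 := b.isLt
    have hval : ∀ c : Fin (n + 1), ((νf c : Fin (n + 1 + k)) : ℕ)
        = if (c : ℕ) = min (m : ℕ) n then (m : ℕ) else (c : ℕ) := by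
      intro c
      simp only [hνf, apply_ite (Fin.val), Fin.val_mk]
    rw [Fin.lt_def, hval a, hval b]
    split_ifs <;> omega
  set ν : Idx (n + 1) k := ⟨νf, hmono⟩ with hν
  have hsm : StrictMono νf := fun a b h => hmono a b h
  have hinj : Function.Injective νf := hsm.injective
  set a₀ : Fin (n + 1) := ⟨min (m : ℕ) n, htn⟩ with ha₀
  have hν₀ : νf a₀ = m := by simp [hνf, ha₀]
  set cols : Fin n → E (n + 1) k :=
    fun j => (Pi.single (νf (a₀.succAbove j)) 1 : E (n + 1) k) with hcols
  set head : Mfd (n + 1) k := ((0 : E (n + 1) k), (Pi.single ν 1 : Psp (n + 1) k)) with hhead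
  set rest : Fin n → Mfd (n + 1) k := fun j => (cols j, (0 : Psp (n + 1) k)) with hrest
  set v : Fin (n + 1) → Mfd (n + 1) k := Fin.cons head rest with hv
  have key := hXi x v
  -- Left-hand side
  have hrem0 : Fin.removeNth (0 : Fin (n + 1)) v = rest := by
    rw [hv, Fin.removeNth_zero, Fin.tail_cons]
  have hfun0 : (fun y => theta (n + 1) k y
        (Fin.cons (lift n k ξ y) rest : Fin (n + 1) → Mfd (n + 1) k))
      = fun y : Mfd (n + 1) k =>
        pApply (n + 1) k y.2 (Fin.cons (ξ y.1) cols : Fin (n + 1) → E (n + 1) k) := by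
    funext y
    show pApply (n + 1) k y.2
      (fun i => ((Fin.cons (lift n k ξ y) rest : Fin (n + 1) → Mfd (n + 1) k) i).1) = _
    rw [fst_cons]
    rfl
  have hL : extD (iota (lift n k ξ) (theta (n + 1) k)) x v
      = pApply (n + 1) k (Pi.single ν 1)
          (Fin.cons (ξ x.1) cols : Fin (n + 1) → E (n + 1) k) := by
    show (∑ i : Fin (n + 1), (-1 : ℝ) ^ (i : ℕ) *
        fderiv ℝ (fun y => theta (n + 1) k y
          (Fin.cons (lift n k ξ y) (Fin.removeNth i v) : Fin (n + 1) → Mfd (n + 1) k)) x (v i))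
      = _
    rw [Fin.sum_univ_succ, hrem0, hfun0]
    have hz : ∀ j : Fin n, (-1 : ℝ) ^ ((Fin.succ j : Fin (n + 1)) : ℕ) *
        fderiv ℝ (fun y => theta (n + 1) k y
          (Fin.cons (lift n k ξ y) (Fin.removeNth (Fin.succ j) v)
            : Fin (n + 1) → Mfd (n + 1) k)) x (v (Fin.succ j)) = 0 := by
      intro j
      have hval : (Fin.removeNth (Fin.succ j) v) ⟨0, j.pos⟩ = head := by
        show v (Fin.succAbove (Fin.succ j) ⟨0, j.pos⟩) = head
        have hsa : Fin.succAbove (Fin.succ j) (⟨0, j.pos⟩ : Fin n) = (0 : Fin (n + 1)) := by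
          rw [Fin.succAbove_of_castSucc_lt _ _ (by simp [Fin.lt_def])]
          ext
          simp
        rw [hsa, hv, Fin.cons_zero]
      have hfunj : (fun y => theta (n + 1) k y
            (Fin.cons (lift n k ξ y) (Fin.removeNth (Fin.succ j) v)
              : Fin (n + 1) → Mfd (n + 1) k))
          = fun _ : Mfd (n + 1) k => (0 : ℝ) := by
        funext y
        apply pApply_col_zero _ _ (Fin.succ (⟨0, j.pos⟩ : Fin n))
        show ((Fin.removeNth (Fin.succ j) v) ⟨0, j.pos⟩).1 = 0
        rw [hval]
      rw [hfunj]
      simp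
    rw [Finset.sum_eq_zero fun j _ => hz j]
    have h00 : v 0 = ((0 : E (n + 1) k), (Pi.single ν 1 : Psp (n + 1) k)) := by
      rw [hv]; simp [hhead]
    rw [h00, fderiv_liftTheta_vert ξ hξ cols x (Pi.single ν 1)]
    simp
  -- Right-hand side
  have hR : iota Xi (Omega (n + 1) k) x v
      = - pApply (n + 1) k (Pi.single ν 1)
          (Fin.cons ((Xi x).1) cols : Fin (n + 1) → E (n + 1) k) := by
    show Omega (n + 1) k x (Fin.cons (Xi x) v : Fin (n + 2) → Mfd (n + 1) k) = _
    rw [Omega_eq, Fin.sum_univ_succ, Fin.sum_univ_succ]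
    -- the i = 0 term vanishes
    have h0 : pApply (n + 1) k
        ((Fin.cons (Xi x) v : Fin (n + 2) → Mfd (n + 1) k) 0).2
        (fun a => ((Fin.removeNth (0 : Fin (n + 2))
          (Fin.cons (Xi x) v : Fin (n + 2) → Mfd (n + 1) k)) a).1) = 0 := by
      apply pApply_col_zero _ _ (0 : Fin (n + 1))
      show ((Fin.removeNth (0 : Fin (n + 2))
        (Fin.cons (Xi x) v : Fin (n + 2) → Mfd (n + 1) k)) (0 : Fin (n + 1))).1 = 0
      rw [Fin.removeNth_zero, Fin.tail_cons]
      show (v 0).1 = 0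
      rw [hv]
      show head.1 = 0
      rfl
    rw [h0]
    -- the terms with i = j + 2 vanish
    have hz2 : ∀ j : Fin n, (-1 : ℝ) ^ (((Fin.succ j : Fin (n + 1)).succ : Fin (n + 2)) : ℕ) *
        pApply (n + 1) k
          ((Fin.cons (Xi x) v : Fin (n + 2) → Mfd (n + 1) k) (Fin.succ (Fin.succ j))).2
          (fun a => ((Fin.removeNth (Fin.succ (Fin.succ j) : Fin (n + 2))
            (Fin.cons (Xi x) v : Fin (n + 2) → Mfd (n + 1) k)) a).1) = 0 := by
      intro j
      have hp : ((Fin.cons (Xi x) v : Fin (n + 2) → Mfd (n + 1) k)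
          (Fin.succ (Fin.succ j))).2 = 0 := by
        rw [Fin.cons_succ, hv, Fin.cons_succ]
      rw [hp, pApply_zero_left, mul_zero]
    rw [Finset.sum_eq_zero fun j _ => hz2 j]
    -- the i = 1 term
    have hrem1 : Fin.removeNth (Fin.succ (0 : Fin (n + 1)))
        (Fin.cons (Xi x) v : Fin (n + 2) → Mfd (n + 1) k)
        = (Fin.cons (Xi x) rest : Fin (n + 1) → Mfd (n + 1) k) := by
      rw [removeNth_succ_cons, hrem0]
    have hp1 : ((Fin.cons (Xi x) v : Fin (n + 2) → Mfd (n + 1) k)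
        (Fin.succ (0 : Fin (n + 1)))).2 = Pi.single ν 1 := by
      rw [Fin.cons_succ, hv]
      rfl
    rw [hrem1, hp1]
    have hcast : (fun a => ((Fin.cons (Xi x) rest : Fin (n + 1) → Mfd (n + 1) k) a).1)
        = (Fin.cons ((Xi x).1) cols : Fin (n + 1) → E (n + 1) k) := by
      rw [fst_cons]
    rw [hcast]
    simp
  rw [hL, hR, neg_neg, pApply_single, pApply_single] at key
  have hd1 : Matrix.det (Matrix.of fun a b =>
      (Fin.cons (ξ x.1) cols : Fin (n + 1) → E (n + 1) k) b (ν.1 a))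
      = (-1 : ℝ) ^ ((a₀ : Fin (n + 1)) : ℕ) * (ξ x.1) (νf a₀) := by
    rw [hcols]; exact det_unit_cols hinj a₀ (ξ x.1)
  have hd2 : Matrix.det (Matrix.of fun a b =>
      (Fin.cons ((Xi x).1) cols : Fin (n + 1) → E (n + 1) k) b (ν.1 a))
      = (-1 : ℝ) ^ ((a₀ : Fin (n + 1)) : ℕ) * ((Xi x).1) (νf a₀) := by
    rw [hcols]; exact det_unit_cols hinj a₀ ((Xi x).1)
  rw [hd1, hd2] at key
  have := mul_left_cancel₀ (pow_ne_zero ((a₀ : Fin (n + 1)) : ℕ)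
    (by norm_num : (-1 : ℝ) ≠ 0)) key
  rw [hν₀] at this
  exact this.symm

end AuxLemmas4
/-- (Lemma 7, Noether.) For every vector field `ξ` on `X×Y` and smooth Hamiltonian
`H`, the external 𝔭-bracket of `Hω` with `P_ξ = ξ⌟θ` satisfies
`{Hω, P_ξ} = L_{Ξ(P_ξ)}(θ − Hω) + d(ξ⌟(Hω))`. Consequently, if `ξ` is an
infinitesimal symmetry, i.e. `L_{Ξ(P_ξ)}(θ − Hω) = 0`, then along the graph `Γ` of
any solution of the Hamilton equations the Noether current `P*_ξ = ξ⌟(θ − Hω)` is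
closed: `d(ξ⌟(θ − Hω))|_Γ = 0`. -/
theorem noether_current
    (n k : ℕ)
    (H : Mfd (n + 1) k → ℝ) (hH : ContDiff ℝ (⊤ : ℕ∞) H)
    (ξ : E (n + 1) k → E (n + 1) k) (hξ : ContDiff ℝ (⊤ : ℕ∞) ξ)
    (Xi : Mfd (n + 1) k → Mfd (n + 1) k)
    (hXi : ∀ (x : Mfd (n + 1) k) (v : Fin (n + 1) → Mfd (n + 1) k),
      extD (iota (lift n k ξ) (theta (n + 1) k)) x v
        = - iota Xi (Omega (n + 1) k) x v) :
    -- `{Hω, P_ξ} = L_{Ξ(P_ξ)}(θ − Hω) + d(ξ⌟(Hω))`: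
    (∀ (x : Mfd (n + 1) k) (v : Fin (n + 1) → Mfd (n + 1) k),
      - iota Xi (extD (Hw n k H)) x v
        = (iota Xi (extD (thH n k H)) x v + extD (iota Xi (thH n k H)) x v)
          + extD (iota (lift n k ξ) (Hw n k H)) x v)
    ∧
    -- the Noether theorem:
    ((∀ (x : Mfd (n + 1) k) (v : Fin (n + 1) → Mfd (n + 1) k),
        iota Xi (extD (thH n k H)) x v + extD (iota Xi (thH n k H)) x v = 0) →
      ∀ (u : (Fin (n + 1) → ℝ) → (Fin k → ℝ)), ContDiff ℝ (⊤ : ℕ∞) u →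
      ∀ (pm : (Fin (n + 1) → ℝ) → Psp (n + 1) k), ContDiff ℝ (⊤ : ℕ∞) pm →
      (∀ (x : Fin (n + 1) → ℝ) (V : Mfd (n + 1) k),
        Omega (n + 1) k (graphMap n k u pm x)
            (Fin.snoc (frame n k (graphMap n k u pm) x) V)
          = dHomega n k H (graphMap n k u pm x)
              (Fin.snoc (frame n k (graphMap n k u pm) x) V)) →
      ∀ x : Fin (n + 1) → ℝ,
        extD (iota (lift n k ξ) (thH n k H)) (graphMap n k u pm x)
          (frame n k (graphMap n k u pm) x) = 0) := by
  -- basic differentiability facts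
  have hξd : Differentiable ℝ ξ := hξ.differentiable (by simp)
  have hHd : Differentiable ℝ H := hH.differentiable (by simp)
  have hfst : ∀ y, (Xi y).1 = ξ y.1 := Xi_fst ξ hξd Xi hXi
  -- `ι_Ξ` and `ι_{lift ξ}` agree on horizontal forms
  have e1 : iota Xi (thH n k H) = iota (lift n k ξ) (thH n k H) := by
    funext y v
    show thH n k H y (Fin.cons (Xi y) v) = thH n k H y (Fin.cons (lift n k ξ y) v)
    have h : ∀ i, ((Fin.cons (Xi y) v : Fin (n + 1) → Mfd (n + 1) k) i).1
        = ((Fin.cons (lift n k ξ y) v : Fin (n + 1) → Mfd (n + 1) k) i).1 := by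
      intro i
      refine Fin.cases ?_ (fun b => ?_) i
      · show (Xi y).1 = (lift n k ξ y).1
        exact hfst y
      · rw [Fin.cons_succ, Fin.cons_succ]
    unfold thH
    rw [theta_fst_congr h, vol_fst_congr h]
  -- differentiability of the various coefficient functions
  have hθdiff : ∀ u : Fin (n + 1) → Mfd (n + 1) k,
      Differentiable ℝ fun y => theta (n + 1) k y u := by
    intro u
    exact differentiable_pApply_const (fun i => (u i).1)
  have hWdiff : ∀ u : Fin (n + 1) → Mfd (n + 1) k,
      Differentiable ℝ fun y => Hw n k H y u := by
    intro u
    show Differentiable ℝ fun y : Mfd (n + 1) k =>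
      H y * Matrix.det (Matrix.of fun a b => (u b).1 (Fin.castAdd k a))
    exact hHd.mul_const _
  have hξ1 : Differentiable ℝ (fun y : Mfd (n + 1) k => ξ y.1) :=
    hξd.comp differentiable_fst
  have hιθdiff : ∀ u : Fin n → Mfd (n + 1) k,
      Differentiable ℝ fun y => iota (lift n k ξ) (theta (n + 1) k) y u := by
    intro u
    have hre : (fun y => iota (lift n k ξ) (theta (n + 1) k) y u)
        = fun y : Mfd (n + 1) k => pApply (n + 1) k y.2
            (Fin.cons (ξ y.1) (fun j => (u j).1) : Fin (n + 1) → E (n + 1) k) := by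
      funext y
      show pApply (n + 1) k y.2
        (fun i => ((Fin.cons (lift n k ξ y) u : Fin (n + 1) → Mfd (n + 1) k) i).1) = _
      rw [fst_cons]
      rfl
    rw [hre]
    exact differentiable_liftTheta ξ hξd _
  have hιWdiff : ∀ u : Fin n → Mfd (n + 1) k,
      Differentiable ℝ fun y => iota (lift n k ξ) (Hw n k H) y u := by
    intro u
    show Differentiable ℝ fun y : Mfd (n + 1) k =>
      H y * Matrix.det (Matrix.of fun a b =>
        ((Fin.cons (lift n k ξ y) u : Fin (n + 1) → Mfd (n + 1) k) b).1 (Fin.castAdd k a))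
    refine hHd.mul fun x' => differentiableAt_det fun a b => ?_
    refine Fin.cases ?_ (fun b' => ?_) b
    · simp only [Matrix.of_apply, Fin.cons_zero]
      exact ((differentiable_pi.mp hξ1) (Fin.castAdd k a)).differentiableAt
    · simp only [Matrix.of_apply, Fin.cons_succ]
      exact differentiableAt_const _
  -- splitting of `extD (θ − Hω)`
  have hsplitA : ∀ (x' : Mfd (n + 1) k) (w : Fin (n + 2) → Mfd (n + 1) k),
      extD (thH n k H) x' w
        = extD (theta (n + 1) k) x' w - extD (Hw n k H) x' w := by
    intro x' w
    have hre : thH n k H = fun y u => theta (n + 1) k y u - Hw n k H y u := rfl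
    rw [hre, extD_sub hθdiff hWdiff x' w]
  have hsplit2 : ∀ (x' : Mfd (n + 1) k) (w : Fin (n + 1) → Mfd (n + 1) k),
      extD (iota (lift n k ξ) (thH n k H)) x' w
        = extD (iota (lift n k ξ) (theta (n + 1) k)) x' w
          - extD (iota (lift n k ξ) (Hw n k H)) x' w := by
    intro x' w
    have hre : iota (lift n k ξ) (thH n k H)
        = fun y u => iota (lift n k ξ) (theta (n + 1) k) y u
            - iota (lift n k ξ) (Hw n k H) y u := rfl
    rw [hre, extD_sub hιθdiff hιWdiff x' w]
  constructor
  · -- Lemma 7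
    intro x v
    have hOm : extD (theta (n + 1) k) x (Fin.cons (Xi x) v)
        = - extD (iota (lift n k ξ) (theta (n + 1) k)) x v := by
      have h2 : iota Xi (Omega (n + 1) k) x v
          = extD (theta (n + 1) k) x (Fin.cons (Xi x) v) := rfl
      have := hXi x v
      rw [h2] at this
      linarith
    have t1 : iota Xi (extD (thH n k H)) x v
        = extD (theta (n + 1) k) x (Fin.cons (Xi x) v)
          - extD (Hw n k H) x (Fin.cons (Xi x) v) := hsplitA x (Fin.cons (Xi x) v)
    have t2 : extD (iota Xi (thH n k H)) x v
        = extD (iota (lift n k ξ) (theta (n + 1) k)) x v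
          - extD (iota (lift n k ξ) (Hw n k H)) x v := by
      rw [e1]
      exact hsplit2 x v
    have t3 : iota Xi (extD (Hw n k H)) x v
        = extD (Hw n k H) x (Fin.cons (Xi x) v) := rfl
    rw [t1, t2, t3]
    linarith [hOm]
  · -- Noether's theorem
    intro hsym u hu pm hpm hham x
    set X₀ := graphMap n k u pm x with hX₀
    set F := frame n k (graphMap n k u pm) x with hFdef
    rw [← e1]
    have h2 := hsym X₀ F
    have hiota : iota Xi (extD (thH n k H)) X₀ F
        = extD (thH n k H) X₀ (Fin.cons (Xi X₀) F) := rfl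
    -- `extD (θ − Hω) = Ω − dH∧ω`
    have hsplitB : ∀ w : Fin (n + 2) → Mfd (n + 1) k,
        extD (thH n k H) X₀ w = Omega (n + 1) k X₀ w - dHomega n k H X₀ w := by
      intro w
      rw [hsplitA X₀ w, extD_Hw_eq H hHd X₀ w]
      rfl
    -- `Ω − dH∧ω` as a single alternating-type sum
    have hsum : ∀ w : Fin (n + 2) → Mfd (n + 1) k,
        Omega (n + 1) k X₀ w - dHomega n k H X₀ w
          = ∑ i : Fin (n + 2), (-1 : ℝ) ^ (i : ℕ) *
              (pApply (n + 1) k (w i).2 (fun a => (Fin.removeNth i w a).1)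
                - fderiv ℝ H X₀ (w i) * vol (n + 1) k X₀ (Fin.removeNth i w)) := by
      intro w
      rw [Omega_eq]
      unfold dHomega
      rw [← Finset.sum_sub_distrib]
      refine Finset.sum_congr rfl fun i _ => ?_
      ring
    have h3 : extD (thH n k H) X₀ (Fin.cons (Xi X₀) F) = 0 := by
      rw [hsplitB (Fin.cons (Xi X₀) F)]
      have hcyc : Omega (n + 1) k X₀ (Fin.cons (Xi X₀) F : Fin (n + 2) → Mfd (n + 1) k)
            - dHomega n k H X₀ (Fin.cons (Xi X₀) F : Fin (n + 2) → Mfd (n + 1) k)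
          = (-1 : ℝ) ^ (n + 1) *
            (Omega (n + 1) k X₀ (Fin.snoc F (Xi X₀) : Fin (n + 2) → Mfd (n + 1) k)
              - dHomega n k H X₀ (Fin.snoc F (Xi X₀) : Fin (n + 2) → Mfd (n + 1) k)) := by
        rw [hsum, hsum]
        refine sum_shuffle (fun V r => pApply (n + 1) k V.2 (fun a => (r a).1)
            - fderiv ℝ H X₀ V * vol (n + 1) k X₀ r) ?_ (Xi X₀) F
        intro V c z
        have hdet : pApply (n + 1) k V.2
            (fun a => ((Fin.cons c z : Fin (n + 1) → Mfd (n + 1) k) a).1)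
            = (-1 : ℝ) ^ n * pApply (n + 1) k V.2
                (fun a => ((Fin.snoc z c : Fin (n + 1) → Mfd (n + 1) k) a).1) := by
          unfold pApply
          rw [Finset.mul_sum]
          refine Finset.sum_congr rfl fun μ _ => ?_
          have hD : Matrix.det (Matrix.of fun a b =>
                ((Fin.cons c z : Fin (n + 1) → Mfd (n + 1) k) b).1 (μ.1 a))
              = (-1 : ℝ) ^ n * Matrix.det (Matrix.of fun a b =>
                ((Fin.snoc z c : Fin (n + 1) → Mfd (n + 1) k) b).1 (μ.1 a)) :=
            det_cons_cycle (fun (mm : Mfd (n + 1) k) a => mm.1 (μ.1 a)) c z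
          rw [hD]
          ring
        have hdv : vol (n + 1) k X₀ (Fin.cons c z : Fin (n + 1) → Mfd (n + 1) k)
            = (-1 : ℝ) ^ n * vol (n + 1) k X₀
                (Fin.snoc z c : Fin (n + 1) → Mfd (n + 1) k) :=
          det_cons_cycle (fun (mm : Mfd (n + 1) k) a => mm.1 (Fin.castAdd k a)) c z
        rw [hdet, hdv]
        ring
      rw [hcyc, hham x (Xi X₀), sub_self, mul_zero]
    linarith [h2, h3, hiota]

end Pataplectic

end
end
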